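/- Let N ≥ 1, γ ∈ (0,1/3), β > 0, p_{x,y} = min(β N^{2γ-1}/(x^γ y^γ), 1), and s₂(y) = (N/y)^{2γ} + (N/y)^γ. Then for every x ∈ {1,…,N}, T(x) := Σ_{y=1}^N p_{x,y} s₂(y) ≤ (2β/(1-3γ)) · (N/x)^γ. -/

import Mathlib

/-!
Bounding the minimum by its first argument, the summand becomes
`β N^(2γ-1) x^(-γ) (N^(2γ) y^(-3γ) + N^γ y^(-2γ))`. Comparing with `∫₁ᴺ t^(-a) dt` gives
`∑_{y ≤ N} y^(-a) ≤ N^(1-a) / (1-a)` for `0 ≤ a < 1`; with `a = 3γ` and `a = 2γ`, and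
`1 - 3γ ≤ 1 - 2γ`, each of the two terms is at most `β N^γ x^(-γ) / (1-3γ)`.
-/

open Finset

lemma sum_Icc_rpow_neg_le (N : ℕ) {a : ℝ} (ha0 : 0 ≤ a) (ha1 : a < 1) :
    ∑ y ∈ Icc 1 N, (y : ℝ) ^ (-a) ≤ (N : ℝ) ^ (1 - a) / (1 - a) := by
  have h1a : 0 < 1 - a := by linarith
  rcases Nat.eq_zero_or_pos N with rfl | hN
  · simp [Real.zero_rpow h1a.ne']
  have hanti : AntitoneOn (fun t : ℝ => t ^ (-a)) (Set.Icc ((1 : ℕ) : ℝ) N) :=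
    fun s hs _ _ hst => Real.rpow_le_rpow_of_nonpos (by simp at hs; linarith) hst (by linarith)
  have htail := hanti.sum_le_integral_Ico hN
  rw [sum_Ico_add' (fun y : ℕ => (y : ℝ) ^ (-a)), Ico_add_one_add_one_eq_Ioc,
    integral_rpow (Or.inl (by linarith)), Nat.cast_one, Real.one_rpow, neg_add_eq_sub] at htail
  rw [Icc_eq_cons_Ioc hN, sum_cons, Nat.cast_one, Real.one_rpow]
  calc 1 + ∑ y ∈ Ioc 1 N, (y : ℝ) ^ (-a) ≤ 1 + ((N : ℝ) ^ (1 - a) - 1) / (1 - a) := by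
        gcongr
    _ = (N : ℝ) ^ (1 - a) / (1 - a) - a / (1 - a) := by field_simp; ring
    _ ≤ (N : ℝ) ^ (1 - a) / (1 - a) := sub_le_self _ (by positivity)

lemma min_div_mul_rpow_add_le {N x y β γ : ℝ} (hN : 0 ≤ N) (hy : 0 < y) :
    min (β * N ^ (2 * γ - 1) / (x ^ γ * y ^ γ)) 1 * ((N / y) ^ (2 * γ) + (N / y) ^ γ) ≤
      β * N ^ (2 * γ - 1) / x ^ γ * (N ^ (2 * γ) * y ^ (-(3 * γ)) + N ^ γ * y ^ (-(2 * γ))) := by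
  have hs : ((N / y) ^ (2 * γ) + (N / y) ^ γ) / y ^ γ =
      N ^ (2 * γ) * y ^ (-(3 * γ)) + N ^ γ * y ^ (-(2 * γ)) := by
    rw [Real.div_rpow hN hy.le, Real.div_rpow hN hy.le, add_div, div_div, div_div,
      ← Real.rpow_add hy, ← Real.rpow_add hy, Real.rpow_neg hy.le, Real.rpow_neg hy.le,
      ← div_eq_mul_inv, ← div_eq_mul_inv, show 2 * γ + γ = 3 * γ by ring, ← two_mul]
  rw [← hs]
  exact (mul_le_mul_of_nonneg_right (min_le_left _ _) (by positivity)).trans_eq (by ring)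

theorem score_sum_bound_general (N : ℕ) (γ β : ℝ) (hγ0 : 0 < γ) (hγ1 : γ < 1/3)
    (hβ : 0 < β) (x : ℕ) (hx : x ∈ Finset.Icc 1 N) :
    ∑ y ∈ Finset.Icc 1 N,
        min (β * (N : ℝ) ^ (2*γ - 1) / ((x : ℝ) ^ γ * (y : ℝ) ^ γ)) 1 *
          (((N : ℝ) / y) ^ (2*γ) + ((N : ℝ) / y) ^ γ)
      ≤ (2 * β / (1 - 3*γ)) * ((N : ℝ) / x) ^ γ := by
  obtain ⟨hx1, hxN⟩ := mem_Icc.mp hx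
  have hx0 : (0 : ℝ) < x := by exact_mod_cast hx1
  have hN0 : (0 : ℝ) < N := by exact_mod_cast hx1.trans hxN
  set c := β * (N : ℝ) ^ (2 * γ - 1) / (x : ℝ) ^ γ
  calc _ ≤ ∑ y ∈ Icc 1 N,
          c * ((N : ℝ) ^ (2 * γ) * (y : ℝ) ^ (-(3 * γ)) + (N : ℝ) ^ γ * (y : ℝ) ^ (-(2 * γ))) :=
        sum_le_sum fun y hy => min_div_mul_rpow_add_le hN0.le (by exact_mod_cast (mem_Icc.mp hy).1)
    _ = c * ((N : ℝ) ^ (2 * γ) * ∑ y ∈ Icc 1 N, (y : ℝ) ^ (-(3 * γ)) +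
          (N : ℝ) ^ γ * ∑ y ∈ Icc 1 N, (y : ℝ) ^ (-(2 * γ))) := by
        simp only [mul_add, sum_add_distrib, mul_sum]
    _ ≤ c * ((N : ℝ) ^ (2 * γ) * ((N : ℝ) ^ (1 - 3 * γ) / (1 - 3 * γ)) +
          (N : ℝ) ^ γ * ((N : ℝ) ^ (1 - 2 * γ) / (1 - 3 * γ))) := by
        gcongr
        · exact sum_Icc_rpow_neg_le N (by linarith) (by linarith)
        · exact (sum_Icc_rpow_neg_le N (by linarith) (by linarith)).trans
            (div_le_div_of_nonneg_left (by positivity) (by linarith) (by linarith))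
    _ = (2 * β / (1 - 3 * γ)) * ((N : ℝ) / x) ^ γ := by
        have hγ : (N : ℝ) ^ (2 * γ - 1) * (N : ℝ) ^ (1 - γ) = (N : ℝ) ^ γ := by
          rw [← Real.rpow_add hN0]; ring_nf
        rw [mul_div_assoc', mul_div_assoc', ← Real.rpow_add hN0, ← Real.rpow_add hN0,
          show 2 * γ + (1 - 3 * γ) = 1 - γ by ring, show γ + (1 - 2 * γ) = 1 - γ by ring,
          Real.div_rpow hN0.le hx0.le]
        linear_combination (2 * β / (x : ℝ) ^ γ / (1 - 3 * γ)) * hγ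

theorem score_sum_bound (N : ℕ) (hN : 1 ≤ N) (γ β : ℝ) (hγ0 : 0 < γ) (hγ1 : γ < 1/3)
    (hβ : 0 < β) (x : ℕ) (hx : x ∈ Finset.Icc 1 N) :
    ∑ y ∈ Finset.Icc 1 N,
        min (β * (N : ℝ) ^ (2*γ - 1) / ((x : ℝ) ^ γ * (y : ℝ) ^ γ)) 1 *
          (((N : ℝ) / y) ^ (2*γ) + ((N : ℝ) / y) ^ γ)
      ≤ (2 * β / (1 - 3*γ)) * ((N : ℝ) / x) ^ γ :=
  score_sum_bound_general N γ β hγ0 hγ1 hβ x hx
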